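/- arXiv:1001.4133 — 3 statements merged into one kernel-verified Lean document; each statement's English description precedes it below -/
import Mathlib

section
/- Let r ≥ 2 be an integer. An integer n has a double-base representation of length r if and only if at least one of the following four statements holds: (1) n has a doubly primitive double-base representation of length r; (2) 6 divides n + 1 and (n + 1)/6 has a double-base representation of length r − 1; (3) 6 divides n − 1 and (n − 1)/6 has a double-base representation of length r − 1; (4) there is a {2,3}-integer d > 1 dividing n such that n/d has a primitive double-base representation of length r. -/
/-- A `{2,3}`-integer: a nonzero integer of the form `±2^a·3^b`. -/
def IsTwoThree (k : ℤ) : Prop := ∃ a b : ℕ, k = 2 ^ a * 3 ^ b ∨ k = -(2 ^ a * 3 ^ b)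

/-- `n` has a double-base representation of length `r`. -/
def HasRep (n : ℤ) (r : ℕ) : Prop :=
  ∃ f : Fin r → ℤ, (∀ i, IsTwoThree (f i)) ∧ n = ∑ i, f i

/-- `n` has a primitive double-base representation of length `r`:
the gcd of the summands is `1`. -/
def HasPrimRep (n : ℤ) (r : ℕ) : Prop :=
  ∃ f : Fin r → ℤ, (∀ i, IsTwoThree (f i)) ∧ n = ∑ i, f i ∧
    Finset.univ.gcd f = 1

/-- `n` has a doubly primitive double-base representation of length `r`:
some summand is not divisible by `2` and a different summand is not
divisible by `3`. -/
def HasDoublyPrimRep (n : ℤ) (r : ℕ) : Prop :=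
  ∃ f : Fin r → ℤ, (∀ i, IsTwoThree (f i)) ∧ n = ∑ i, f i ∧
    ∃ i j, i ≠ j ∧ ¬(2 ∣ f i) ∧ ¬(3 ∣ f j)

/-! Divide a representation by the gcd `d` of its summands, which is again a {2,3}-integer;
if `d > 1` this is case (4). If `d = 1` but the representation is not doubly primitive, the
summand prime to 2 must be the one prime to 3 and every other summand is divisible by 6, so that
summand is `±1` and `n = ±1 + 6 m` with `m` a sum of `r - 1` {2,3}-integers. -/

namespace IsTwoThree

lemma iff_natAbs {k : ℤ} : IsTwoThree k ↔ ∃ a b : ℕ, k.natAbs = 2 ^ a * 3 ^ b := by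
  constructor
  · rintro ⟨a, b, rfl | rfl⟩ <;> exact ⟨a, b, by simp [Int.natAbs_mul, Int.natAbs_pow]⟩
  · rintro ⟨a, b, h⟩
    refine ⟨a, b, ?_⟩
    rcases Int.natAbs_eq k with hk | hk <;> rw [hk, h] <;> push_cast <;> simp

lemma ne_zero {k : ℤ} (h : IsTwoThree k) : k ≠ 0 := by
  obtain ⟨a, b, h⟩ := iff_natAbs.mp h
  rw [← Int.natAbs_ne_zero, h]
  positivity

lemma mul {k l : ℤ} (hk : IsTwoThree k) (hl : IsTwoThree l) : IsTwoThree (k * l) := by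
  obtain ⟨a, b, hk⟩ := iff_natAbs.mp hk
  obtain ⟨c, d, hl⟩ := iff_natAbs.mp hl
  exact iff_natAbs.mpr ⟨a + c, b + d, by rw [Int.natAbs_mul, hk, hl]; ring⟩

lemma of_dvd {k d : ℤ} (hk : IsTwoThree k) (hd : d ∣ k) : IsTwoThree d := by
  obtain ⟨a, b, hk⟩ := iff_natAbs.mp hk
  have hd : d.natAbs ∣ 2 ^ a * 3 ^ b := hk ▸ Int.natAbs_dvd_natAbs.mpr hd
  obtain ⟨d₂, d₃, h₂, h₃, hd⟩ := Nat.dvd_mul.mp hd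
  obtain ⟨c, -, rfl⟩ := (Nat.dvd_prime_pow Nat.prime_two).mp h₂
  obtain ⟨e, -, rfl⟩ := (Nat.dvd_prime_pow Nat.prime_three).mp h₃
  exact iff_natAbs.mpr ⟨c, e, hd.symm⟩

lemma eq_one_or_eq_neg_one {k : ℤ} (hk : IsTwoThree k) (h₂ : ¬ 2 ∣ k) (h₃ : ¬ 3 ∣ k) :
    k = 1 ∨ k = -1 := by
  obtain ⟨a, b, hk'⟩ := iff_natAbs.mp hk
  have ha : a = 0 := by
    by_contra ha
    exact h₂ (Int.ofNat_dvd_left.mpr (hk' ▸ (dvd_pow_self 2 ha).mul_right _))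
  have hb : b = 0 := by
    by_contra hb
    exact h₃ (Int.ofNat_dvd_left.mpr (hk' ▸ (dvd_pow_self 3 hb).mul_left _))
  subst ha hb
  omega

lemma one : IsTwoThree 1 := ⟨0, 0, Or.inl (by norm_num)⟩

lemma neg_one : IsTwoThree (-1) := ⟨0, 0, Or.inr (by norm_num)⟩

lemma six : IsTwoThree 6 := ⟨1, 1, Or.inl (by norm_num)⟩

end IsTwoThree

lemma Finset.exists_not_dvd_of_gcd_eq_one {α ι : Type*} [CommMonoidWithZero α]
    [NormalizedGCDMonoid α] {s : Finset ι} {f : ι → α} (h : s.gcd f = 1) {p : α}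
    (hp : ¬ IsUnit p) : ∃ i ∈ s, ¬ p ∣ f i := by
  by_contra! H
  exact hp (isUnit_of_dvd_one (h ▸ Finset.dvd_gcd H))

namespace HasRep

variable {m n : ℤ} {r s : ℕ}

lemma mul_left (h : HasRep m r) {d : ℤ} (hd : IsTwoThree d) : HasRep (d * m) r := by
  obtain ⟨f, hf, rfl⟩ := h
  exact ⟨fun i => d * f i, fun i => hd.mul (hf i), Finset.mul_sum _ _ _⟩

lemma add_cons (h : HasRep m s) {u : ℤ} (hu : IsTwoThree u) : HasRep (u + m) (s + 1) := by
  obtain ⟨f, hf, rfl⟩ := h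
  exact ⟨Fin.cons u f, Fin.cases hu hf, (Fin.sum_cons u f).symm⟩

lemma exists_hasPrimRep_div (h : HasRep n r) (hr : 0 < r) :
    ∃ d, IsTwoThree d ∧ 0 < d ∧ d ∣ n ∧ HasPrimRep (n / d) r := by
  obtain ⟨f, hf, rfl⟩ := h
  set d := Finset.univ.gcd f
  have hd : d ∣ f ⟨0, hr⟩ := Finset.gcd_dvd (Finset.mem_univ _)
  have hd0 : d ≠ 0 := fun h0 => (hf ⟨0, hr⟩).ne_zero (zero_dvd_iff.mp (h0 ▸ hd))
  obtain ⟨g, hfg, hg⟩ := Finset.extract_gcd f ⟨⟨0, hr⟩, Finset.mem_univ _⟩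
  have hfg : ∀ i, f i = d * g i := fun i => hfg i (Finset.mem_univ i)
  have hsum : ∑ i, f i = d * ∑ i, g i := by simp only [hfg, Finset.mul_sum]
  refine ⟨d, (hf _).of_dvd hd, ?_, ⟨_, hsum⟩, g, fun i => (hf i).of_dvd ⟨d, ?_⟩, ?_, hg⟩
  · exact lt_of_le_of_ne ((Int.nonneg_iff_normalize_eq_self d).mp Finset.normalize_gcd) hd0.symm
  · rw [hfg, mul_comm]
  · rw [hsum, Int.mul_ediv_cancel_left _ hd0]

end HasRep

lemma HasDoublyPrimRep.hasRep {n : ℤ} {r : ℕ} (h : HasDoublyPrimRep n r) : HasRep n r :=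
  let ⟨f, hf, hn, _⟩ := h
  ⟨f, hf, hn⟩

lemma HasPrimRep.hasRep {n : ℤ} {r : ℕ} (h : HasPrimRep n r) : HasRep n r :=
  let ⟨f, hf, hn, _⟩ := h
  ⟨f, hf, hn⟩

lemma exists_six_dvd_of_gcd_eq_one {ι : Type*} [Fintype ι] {f : ι → ℤ}
    (hgcd : Finset.univ.gcd f = 1) (hf : ¬ ∃ i j, i ≠ j ∧ ¬ 2 ∣ f i ∧ ¬ 3 ∣ f j) :
    ∃ j, ¬ 2 ∣ f j ∧ ¬ 3 ∣ f j ∧ ∀ k ≠ j, 6 ∣ f k := by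
  push Not at hf
  obtain ⟨i, -, hi⟩ := Finset.exists_not_dvd_of_gcd_eq_one hgcd (p := 2) (by decide)
  obtain ⟨j, -, hj⟩ := Finset.exists_not_dvd_of_gcd_eq_one hgcd (p := 3) (by decide)
  obtain rfl : i = j := by_contra fun hij => hj (hf i j hij hi)
  refine ⟨i, hi, hj, fun k hk => ?_⟩
  have h₂ : 2 ∣ f k := by_contra fun h₂ => hj (hf k i hk h₂)
  have h₃ : 3 ∣ f k := hf i k hk.symm hi
  omega

lemma exists_hasRep_of_six_dvd {s : ℕ} {f : Fin (s + 1) → ℤ} (hf : ∀ i, IsTwoThree (f i))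
    {j : Fin (s + 1)} (h6 : ∀ k ≠ j, 6 ∣ f k) :
    ∃ m, HasRep m s ∧ ∑ i, f i = f j + 6 * m := by
  have hq : ∀ k, f (j.succAbove k) = 6 * (f (j.succAbove k) / 6) := fun k =>
    (Int.mul_ediv_cancel' (h6 _ (Fin.succAbove_ne j k))).symm
  refine ⟨_, ⟨fun k => f (j.succAbove k) / 6,
    fun k => (hf (j.succAbove k)).of_dvd ⟨6, by rw [mul_comm, ← hq]⟩, rfl⟩, ?_⟩
  rw [Fin.sum_univ_succAbove f j, Finset.mul_sum]
  exact congrArg _ (Finset.sum_congr rfl fun k _ => hq k)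

lemma HasPrimRep.hasDoublyPrimRep_or {n : ℤ} {s : ℕ} (h : HasPrimRep n (s + 1)) :
    HasDoublyPrimRep n (s + 1) ∨
      ∃ u m, (u = 1 ∨ u = -1) ∧ HasRep m s ∧ n = u + 6 * m := by
  obtain ⟨f, hf, rfl, hgcd⟩ := h
  by_cases hdp : ∃ i j, i ≠ j ∧ ¬ 2 ∣ f i ∧ ¬ 3 ∣ f j
  · exact Or.inl ⟨f, hf, rfl, hdp⟩
  obtain ⟨j, h₂, h₃, h6⟩ := exists_six_dvd_of_gcd_eq_one hgcd hdp
  obtain ⟨m, hm, hsum⟩ := exists_hasRep_of_six_dvd hf h6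
  exact Or.inr ⟨f j, m, (hf j).eq_one_or_eq_neg_one h₂ h₃, hm, hsum⟩

theorem rep_iff (n : ℤ) (r : ℕ) (hr : 2 ≤ r) :
    HasRep n r ↔
      HasDoublyPrimRep n r ∨
      ((6 ∣ n + 1) ∧ HasRep ((n + 1) / 6) (r - 1)) ∨
      ((6 ∣ n - 1) ∧ HasRep ((n - 1) / 6) (r - 1)) ∨
      (∃ d : ℤ, IsTwoThree d ∧ 1 < d ∧ d ∣ n ∧ HasPrimRep (n / d) r) := by
  obtain ⟨s, rfl⟩ : ∃ s, r = s + 1 := ⟨r - 1, by omega⟩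
  rw [Nat.add_sub_cancel]
  constructor
  · intro h
    obtain ⟨d, hd, hd0, hdn, hprim⟩ := h.exists_hasPrimRep_div s.succ_pos
    rcases (show 1 ≤ d from hd0).eq_or_lt with rfl | hd1
    · rw [Int.ediv_one] at hprim
      obtain hdp | ⟨u, m, rfl | rfl, hm, rfl⟩ := hprim.hasDoublyPrimRep_or
      · exact Or.inl hdp
      · exact Or.inr (Or.inr (Or.inl ⟨⟨m, by ring⟩, by simpa using hm⟩))
      · exact Or.inr (Or.inl ⟨⟨m, by ring⟩, by simpa using hm⟩)
    · exact Or.inr (Or.inr (Or.inr ⟨d, hd, hd1, hdn, hprim⟩))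
  · rintro (h | ⟨h6, h⟩ | ⟨h6, h⟩ | ⟨d, hd, -, hdn, h⟩)
    · exact h.hasRep
    · simpa [Int.mul_ediv_cancel' h6] using
        (h.mul_left IsTwoThree.six).add_cons IsTwoThree.neg_one
    · simpa [Int.mul_ediv_cancel' h6] using
        (h.mul_left IsTwoThree.six).add_cons IsTwoThree.one
    · simpa [Int.mul_ediv_cancel' hdn] using h.hasRep.mul_left hd
end

section
/- Let r ≥ 2 and let n = n_1 + ... + n_r be a double-base representation of an integer n that is primitive but not doubly primitive. Then exactly one of the summands n_i is equal to 1 or −1, and every other summand is divisible by 6. -/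
theorem primitive_not_doubly_primitive (n : ℤ) (r : ℕ) (hr : 2 ≤ r)
    (f : Fin r → ℤ) (hf : ∀ i, IsTwoThree (f i)) (hsum : n = ∑ i, f i)
    (hprim : Finset.univ.gcd f = 1)
    (hnotdp : ¬ ∃ i j, i ≠ j ∧ ¬(2 ∣ f i) ∧ ¬(3 ∣ f j)) :
    ∃ i, (f i = 1 ∨ f i = -1) ∧
      ∀ j, j ≠ i → (6 ∣ f j) ∧ ¬(f j = 1 ∨ f j = -1) := by
  have h2 : ∃ i, ¬ (2:ℤ) ∣ f i := by
    by_contra h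
    push_neg at h
    have : (2:ℤ) ∣ Finset.univ.gcd f := Finset.dvd_gcd (fun i _ => h i)
    rw [hprim] at this
    norm_num at this
  have h3 : ∃ i, ¬ (3:ℤ) ∣ f i := by
    by_contra h
    push_neg at h
    have : (3:ℤ) ∣ Finset.univ.gcd f := Finset.dvd_gcd (fun i _ => h i)
    rw [hprim] at this
    norm_num at this
  obtain ⟨i0, hi2⟩ := h2
  obtain ⟨j0, hj3⟩ := h3
  have heq : i0 = j0 := by
    by_contra hne
    exact hnotdp ⟨i0, j0, hne, hi2, hj3⟩
  subst heq
  have hi3 : ¬ (3:ℤ) ∣ f i0 := hj3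
  refine ⟨i0, ?_, ?_⟩
  · obtain ⟨a, b, hab⟩ := hf i0
    have ha : a = 0 := by
      by_contra ha
      apply hi2
      have hd : (2:ℤ) ∣ 2 ^ a * 3 ^ b := dvd_mul_of_dvd_left (dvd_pow_self 2 ha) _
      rcases hab with h | h <;> rw [h]
      · exact hd
      · exact hd.neg_right
    have hb : b = 0 := by
      by_contra hb
      apply hi3
      have hd : (3:ℤ) ∣ 2 ^ a * 3 ^ b := dvd_mul_of_dvd_right (dvd_pow_self 3 hb) _
      rcases hab with h | h <;> rw [h]
      · exact hd
      · exact hd.neg_right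
    subst ha; subst hb
    simpa using hab
  · intro j hji
    have h2j : (2:ℤ) ∣ f j := by
      by_contra h
      exact hnotdp ⟨j, i0, hji, h, hi3⟩
    have h3j : (3:ℤ) ∣ f j := by
      by_contra h
      exact hnotdp ⟨i0, j, hji.symm, hi2, h⟩
    have h6 : (6:ℤ) ∣ f j := by omega
    refine ⟨h6, ?_⟩
    rintro (h | h) <;> rw [h] at h6 <;> omega
end

section
/- The integer 103 cannot be written as a sum of two {2,3}-integers; that is, 103 has no double-base representation of length 2. -/
lemma three_pow_mod8 : ∀ b : ℕ, ((3:ℤ)^b % 8 = 1 ∧ Even b) ∨ ((3:ℤ)^b % 8 = 3 ∧ Odd b) := by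
  intro b
  induction b with
  | zero => left; simp
  | succ n ih =>
    rcases ih with ⟨h1, h2⟩ | ⟨h1, h2⟩
    · right; exact ⟨by rw [pow_succ]; omega, Even.add_one h2⟩
    · left; exact ⟨by rw [pow_succ]; omega, h2.add_one⟩

lemma two_pow_mod3 : ∀ c : ℕ, ((2:ℤ)^c % 3 = 1 ∧ Even c) ∨ ((2:ℤ)^c % 3 = 2 ∧ Odd c) := by
  intro c
  induction c with
  | zero => left; simp
  | succ n ih =>
    rcases ih with ⟨h1, h2⟩ | ⟨h1, h2⟩
    · right; exact ⟨by rw [pow_succ]; omega, Even.add_one h2⟩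
    · left; exact ⟨by rw [pow_succ]; omega, h2.add_one⟩

lemma pow2_le_bound {c n : ℕ} (h : (2:ℤ)^c ≤ 2^n) : c ≤ n := by
  by_contra h'
  push_neg at h'
  have h1 : (2:ℤ)^(n+1) ≤ 2^c := pow_le_pow_right₀ (by norm_num) (by omega)
  have h2 : (2:ℤ)^n < 2^(n+1) := by
    rw [pow_succ]; nlinarith [pow_pos (show (0:ℤ) < 2 by norm_num) n]
  linarith

lemma pow3_le_bound {b n : ℕ} (h : (3:ℤ)^b ≤ 3^n) : b ≤ n := by
  by_contra h'
  push_neg at h'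
  have h1 : (3:ℤ)^(n+1) ≤ 3^b := pow_le_pow_right₀ (by norm_num) (by omega)
  have h2 : (3:ℤ)^n < 3^(n+1) := by
    rw [pow_succ]; nlinarith [pow_pos (show (0:ℤ) < 3 by norm_num) n]
  linarith

/-- The hard case: `2^c = 103 + 3^b` has no solutions. -/
lemma hard (b c : ℕ) (h : (2:ℤ)^c = 103 + 3^b) : False := by
  have h3b : (1:ℤ) ≤ 3^b := one_le_pow₀ (by norm_num)
  have h2c : (1:ℤ) ≤ 2^c := one_le_pow₀ (by norm_num)
  -- c ≥ 3
  have hc3 : 3 ≤ c := by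
    by_contra h'
    push_neg at h'
    have : (2:ℤ)^c ≤ 2^2 := pow_le_pow_right₀ (by norm_num) (by omega)
    norm_num at this
    linarith
  have h8 : (8:ℤ) ∣ 2^c := by
    calc (8:ℤ) = 2^3 := by norm_num
    _ ∣ 2^c := pow_dvd_pow 2 hc3
  -- b even
  have hbe : Even b := by
    rcases three_pow_mod8 b with ⟨h1, h2⟩ | ⟨h1, h2⟩
    · exact h2
    · omega
  -- c even
  have hce : Even c := by
    rcases b with _ | b'
    · -- b = 0 : 2^c = 104, contradiction directly (so any conclusion)
      norm_num at h
      have : c ≤ 7 := pow2_le_bound (n := 7) (by rw [h]; norm_num)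
      interval_cases c <;> norm_num at h
    · have h3 : (3:ℤ) ∣ 3^(b'+1) := dvd_pow_self 3 (by omega)
      rcases two_pow_mod3 c with ⟨h1, h2⟩ | ⟨h1, h2⟩
      · exact h2
      · omega
  obtain ⟨u, hu⟩ := hce
  obtain ⟨v, hv⟩ := hbe
  subst hu hv
  have hP : (2:ℤ)^(u+u) = 2^u * 2^u := by rw [pow_add]
  have hQ : (3:ℤ)^(v+v) = 3^v * 3^v := by rw [pow_add]
  set P := (2:ℤ)^u with hPdef
  set Q := (3:ℤ)^v with hQdef
  have hfac : (P - Q) * (P + Q) = 103 := by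
    have := h
    rw [hP, hQ] at this
    ring_nf
    ring_nf at this
    linarith
  have hPpos : (1:ℤ) ≤ P := one_le_pow₀ (by norm_num)
  have hQpos : (1:ℤ) ≤ Q := one_le_pow₀ (by norm_num)
  have hdvd : (P + Q) ∣ 103 := ⟨P - Q, by rw [← hfac]; ring⟩
  have hle : P + Q ≤ 103 := Int.le_of_dvd (by norm_num) hdvd
  have hge : 2 ≤ P + Q := by linarith
  have hs : P + Q = 103 := by
    obtain ⟨s, hsdef⟩ : ∃ s, s = P + Q := ⟨_, rfl⟩
    rw [← hsdef] at hdvd hle hge ⊢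
    interval_cases s <;> omega
  have hd : P - Q = 1 := by
    rw [hs] at hfac
    linarith
  have hQ51 : Q = 51 := by linarith
  have hv3 : v ≤ 4 := pow3_le_bound (n := 4) (by rw [← hQdef]; norm_num; linarith)
  rw [hQdef] at hQ51
  interval_cases v <;> norm_num at hQ51

/-- Core: an odd `{2,3}`-integer plus an even one never equals 103. -/
lemma core (b c d : ℕ) (ε δ : ℤ) (hε : ε = 1 ∨ ε = -1) (hδ : δ = 1 ∨ δ = -1)
    (hc : 1 ≤ c) : ε * 3^b + δ * (2^c * 3^d) ≠ 103 := by
  intro h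
  have h2c : (1:ℤ) ≤ 2^c := one_le_pow₀ (by norm_num)
  rcases Nat.eq_zero_or_pos b with hb | hb
  · -- x = ±1
    subst hb
    rcases Nat.eq_zero_or_pos d with hd | hd
    · -- y = ±2^c
      subst hd
      simp only [pow_zero, mul_one] at h
      rcases hε with rfl | rfl <;> rcases hδ with rfl | rfl
      · -- 2^c = 102
        have h102 : (2:ℤ)^c = 102 := by linarith
        have : c ≤ 7 := pow2_le_bound (n := 7) (by rw [h102]; norm_num)
        interval_cases c <;> norm_num at h102
      · linarith
      · -- 2^c = 104
        have h104 : (2:ℤ)^c = 104 := by linarith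
        have : c ≤ 7 := pow2_le_bound (n := 7) (by rw [h104]; norm_num)
        interval_cases c <;> norm_num at h104
      · linarith
    · -- y = ±2^c·3^d, d ≥ 1 : 2^c·3^d ∈ {102, 104}, but 6·17 resp 3∤104
      simp only [pow_zero] at h
      have h3d : (1:ℤ) ≤ 3^d := one_le_pow₀ (by norm_num)
      have hpos : (1:ℤ) ≤ 2^c * 3^d := one_le_mul_of_one_le_of_one_le h2c h3d
      have hval : (2:ℤ)^c * 3^d = 102 ∨ (2:ℤ)^c * 3^d = 104 := by
        rcases hε with rfl | rfl <;> rcases hδ with rfl | rfl <;> [left; linarith; right; linarith] <;> linarith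
      have hk2 : (2:ℤ)^c ≤ 104 := by
        rcases hval with h' | h' <;>
          nlinarith [mul_le_mul_of_nonneg_left h3d (by linarith : (0:ℤ) ≤ 2^c)]
      have hk3 : (3:ℤ)^d ≤ 104 := by
        rcases hval with h' | h' <;>
          nlinarith [mul_le_mul_of_nonneg_right h2c (by linarith : (0:ℤ) ≤ 3^d)]
      have hcb : c ≤ 7 := pow2_le_bound (n := 7) (by norm_num; linarith)
      have hdb : d ≤ 5 := pow3_le_bound (n := 5) (by norm_num; linarith)
      interval_cases c <;> interval_cases d <;> norm_num at hval
  · rcases Nat.eq_zero_or_pos d with hd | hd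
    · -- x = ±3^b (b ≥ 1), y = ±2^c
      subst hd
      simp only [pow_zero, mul_one] at h
      have h3b : (1:ℤ) ≤ 3^b := one_le_pow₀ (by norm_num)
      rcases hε with rfl | rfl <;> rcases hδ with rfl | rfl
      · -- 3^b + 2^c = 103
        simp only [one_mul] at h
        have hbb : b ≤ 5 := pow3_le_bound (n := 5) (by norm_num; linarith)
        have hcc : c ≤ 7 := pow2_le_bound (n := 7) (by norm_num; linarith)
        interval_cases b <;> interval_cases c <;> norm_num at h
      · -- 3^b - 2^c = 103
        have h' : (3:ℤ)^b = 103 + 2^c := by linarith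
        rcases Nat.lt_or_ge c 3 with hc3 | hc3
        · interval_cases c <;>
          · norm_num at h'
            have hbb : b ≤ 5 := pow3_le_bound (n := 5) (by rw [h']; norm_num)
            interval_cases b <;> norm_num at h'
        · have h8 : (8:ℤ) ∣ 2^c := by
            calc (8:ℤ) = 2^3 := by norm_num
            _ ∣ 2^c := pow_dvd_pow 2 hc3
          rcases three_pow_mod8 b with ⟨h1, _⟩ | ⟨h1, _⟩ <;> omega
      · -- 2^c - 3^b = 103
        exact hard b c (by linarith)
      · linarith
    · -- b ≥ 1 and d ≥ 1 : 3 divides everything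
      have h3 : (3:ℤ) ∣ 103 := by
        rw [← h]
        have d1 : (3:ℤ) ∣ 3^b := dvd_pow_self 3 (by omega)
        have d2 : (3:ℤ) ∣ 3^d := dvd_pow_self 3 (by omega)
        exact dvd_add (Dvd.dvd.mul_left d1 ε) (Dvd.dvd.mul_left (Dvd.dvd.mul_left d2 _) δ)
      norm_num at h3

theorem no_rep_103 : ¬ HasRep 103 2 := by
  rintro ⟨f, hf, hsum⟩
  obtain ⟨a, b, hx⟩ := hf 0
  obtain ⟨c, d, hy⟩ := hf 1
  rw [Fin.sum_univ_two] at hsum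
  have hx' : ∃ ε : ℤ, (ε = 1 ∨ ε = -1) ∧ f 0 = ε * (2^a * 3^b) := by
    rcases hx with h | h
    · exact ⟨1, Or.inl rfl, by linarith⟩
    · exact ⟨-1, Or.inr rfl, by linarith⟩
  have hy' : ∃ δ : ℤ, (δ = 1 ∨ δ = -1) ∧ f 1 = δ * (2^c * 3^d) := by
    rcases hy with h | h
    · exact ⟨1, Or.inl rfl, by linarith⟩
    · exact ⟨-1, Or.inr rfl, by linarith⟩
  obtain ⟨ε, hε, hx2⟩ := hx'
  obtain ⟨δ, hδ, hy2⟩ := hy'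
  rw [hx2, hy2] at hsum
  rcases Nat.eq_zero_or_pos a with ha | ha <;> rcases Nat.eq_zero_or_pos c with hc | hc
  · -- both odd: sum is even, 103 odd
    subst ha; subst hc
    simp only [pow_zero, one_mul] at hsum
    have o1 : Odd (ε * 3^b) := by
      rcases hε with rfl | rfl
      · simpa using (Odd.pow (by decide : Odd (3:ℤ)) : Odd ((3:ℤ)^b))
      · simpa using ((Odd.pow (by decide : Odd (3:ℤ)) : Odd ((3:ℤ)^b)).neg)
    have o2 : Odd (δ * 3^d) := by
      rcases hδ with rfl | rfl
      · simpa using (Odd.pow (by decide : Odd (3:ℤ)) : Odd ((3:ℤ)^d))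
      · simpa using ((Odd.pow (by decide : Odd (3:ℤ)) : Odd ((3:ℤ)^d)).neg)
    have : Even (ε * 3^b + δ * 3^d) := Odd.add_odd o1 o2
    rw [← hsum] at this
    rcases this with ⟨k, hk⟩
    omega
  · -- a = 0 : apply core
    subst ha
    simp only [pow_zero, one_mul] at hsum
    exact core b c d ε δ hε hδ hc hsum.symm
  · -- c = 0 : apply core with roles swapped
    subst hc
    simp only [pow_zero, one_mul] at hsum
    exact core d a b δ ε hδ hε ha (by linarith)
  · -- both even: sum is even
    have e1 : (2:ℤ) ∣ ε * (2^a * 3^b) :=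
      Dvd.dvd.mul_left (Dvd.dvd.mul_right (dvd_pow_self 2 (by omega)) _) ε
    have e2 : (2:ℤ) ∣ δ * (2^c * 3^d) :=
      Dvd.dvd.mul_left (Dvd.dvd.mul_right (dvd_pow_self 2 (by omega)) _) δ
    have : (2:ℤ) ∣ 103 := hsum ▸ dvd_add e1 e2
    norm_num at this
end
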